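/- arXiv:2408.14565 — 2 statements merged into one kernel-verified Lean document; each statement's English description precedes it below -/
import Mathlib

section
/- Let Y ~ Bern(α), and let Ŷ be the output of a binary symmetric channel with crossover probability β applied to Y. For ε ∈ [0,1], let T ~ Bern(ε) be independent of (Y,Ŷ), and set (U,V) = (0,Ŷ) if T = 0 and (U,V) = (Ŷ,0) if T = 1. Then with g(u,v) = max{u,v}: (i) Y – Ŷ – (U,V) is a Markov chain; (ii) (Y, g(U,V)) has the same joint distribution as (Y, Ŷ); (iii) when ε = 0, g(U,V) is independent of U; (iv) when ε = 1, g(U,V) = U almost surely. -/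
open scoped BigOperators

namespace CRAN

variable {Ω : Type*} [Fintype Ω]

/-- `p` is a probability mass function on the finite sample space `Ω`. -/
def IsPMF (p : Ω → ℝ) : Prop := (∀ ω, 0 ≤ p ω) ∧ ∑ ω, p ω = 1

/-- Distribution (pushforward pmf) of a random variable `X` under `p`. -/
noncomputable def dist {α : Type*} [DecidableEq α] (p : Ω → ℝ) (X : Ω → α) (a : α) : ℝ :=
  ∑ ω, if X ω = a then p ω else 0

/-- Mutual information `I(X; Y)` for finite discrete random variables. -/
noncomputable def mi {α β : Type*} [Fintype α] [DecidableEq α] [Fintype β] [DecidableEq β]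
    (p : Ω → ℝ) (X : Ω → α) (Y : Ω → β) : ℝ :=
  ∑ a : α, ∑ b : β,
    dist p (fun ω => (X ω, Y ω)) (a, b) *
      Real.log (dist p (fun ω => (X ω, Y ω)) (a, b) / (dist p X a * dist p Y b))

/-- Conditional mutual information `I(X; Y | Z)`. -/
noncomputable def cmi {α β γ : Type*} [Fintype α] [DecidableEq α] [Fintype β] [DecidableEq β]
    [Fintype γ] [DecidableEq γ] (p : Ω → ℝ) (X : Ω → α) (Y : Ω → β) (Z : Ω → γ) : ℝ :=
  ∑ a : α, ∑ b : β, ∑ c : γ,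
    dist p (fun ω => (X ω, Y ω, Z ω)) (a, b, c) *
      Real.log ((dist p Z c * dist p (fun ω => (X ω, Y ω, Z ω)) (a, b, c)) /
        (dist p (fun ω => (X ω, Z ω)) (a, c) * dist p (fun ω => (Y ω, Z ω)) (b, c)))

/-- Shannon entropy `H(X)`. -/
noncomputable def ent {α : Type*} [Fintype α] [DecidableEq α] (p : Ω → ℝ) (X : Ω → α) : ℝ :=
  ∑ a : α, Real.negMulLog (dist p X a)

/-- `X` and `Y` are independent under `p`. -/
def Indep {α β : Type*} [DecidableEq α] [DecidableEq β]
    (p : Ω → ℝ) (X : Ω → α) (Y : Ω → β) : Prop :=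
  ∀ a b, dist p (fun ω => (X ω, Y ω)) (a, b) = dist p X a * dist p Y b

/-- `X` and `Y` are conditionally independent given `Z` under `p`. -/
def CondIndep {α β γ : Type*} [DecidableEq α] [DecidableEq β] [DecidableEq γ]
    (p : Ω → ℝ) (X : Ω → α) (Y : Ω → β) (Z : Ω → γ) : Prop :=
  ∀ a b c, dist p Z c * dist p (fun ω => (X ω, Y ω, Z ω)) (a, b, c) =
    dist p (fun ω => (X ω, Z ω)) (a, c) * dist p (fun ω => (Y ω, Z ω)) (b, c)

/-- A finite family of random variables is mutually independent under `p`. -/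
def MutIndep {ι α : Type*} [Fintype ι] [DecidableEq ι] [DecidableEq α]
    (p : Ω → ℝ) (X : ι → Ω → α) : Prop :=
  ∀ f : ι → α, dist p (fun ω i => X i ω) f = ∏ i, dist p (X i) (f i)

/-- The sub-tuple `(X_i : i ∈ S)` of a family of random variables. -/
def tup {ι 𝒳 : Type*} (X : ι → Ω → 𝒳) (S : Finset ι) : Ω → (↥S → 𝒳) :=
  fun ω i => X i.1 ω

/-- The joint law of `(X_1^K, Y_1^L, Ŷ_1^L)` factorizes as
`∏ₖ p(xₖ) · p(y_1^L | x_1^K) · ∏ₗ p(ŷₗ | yₗ)` (uplink C-RAN distribution). -/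
def CRANFactor {K L : ℕ} {𝒳 𝒴 𝒵 : Type*} [DecidableEq 𝒳] [DecidableEq 𝒴] [DecidableEq 𝒵]
    (p : Ω → ℝ) (X : Fin K → Ω → 𝒳) (Y : Fin L → Ω → 𝒴) (Yh : Fin L → Ω → 𝒵) : Prop :=
  ∃ (q : (Fin K → 𝒳) → (Fin L → 𝒴) → ℝ) (r : Fin L → 𝒴 → 𝒵 → ℝ),
    (∀ x y, 0 ≤ q x y) ∧ (∀ ℓ y z, 0 ≤ r ℓ y z) ∧
    ∀ (x : Fin K → 𝒳) (y : Fin L → 𝒴) (z : Fin L → 𝒵),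
      dist p (fun ω => (fun i => X i ω, fun ℓ => Y ℓ ω, fun ℓ => Yh ℓ ω)) (x, y, z) =
        (∏ i, dist p (X i) (x i)) * q x y * ∏ ℓ, r ℓ (y ℓ) (z ℓ)


/-- The sample space for the quantization-split example: coordinates `(Y, Ŷ, T)`. -/
noncomputable def qsplitPMF (a b e : ℝ) : Bool × Bool × Bool → ℝ := fun ω =>
  (if ω.1 then a else 1 - a) * (if ω.2.1 = ω.1 then 1 - b else b) *
    (if ω.2.2 then e else 1 - e)

/-- The binary quantization split: `Y ~ Bern(α)`, `Ŷ = BSC(β)(Y)`,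
`T ~ Bern(ε)` independent, `(U,V) = (0,Ŷ)` if `T = 0` and `(Ŷ,0)` if `T = 1`,
`g(u,v) = max{u,v}`. Then: (i) `Y – Ŷ – (U,V)` is a Markov chain; (ii) `(Y, g(U,V))` is
distributed as `(Y, Ŷ)`; (iii) at `ε = 0`, `g(U,V)` is independent of `U`;
(iv) at `ε = 1`, `g(U,V) = U` almost surely. -/
theorem stmt9 (a b e : ℝ) (ha : a ∈ Set.Icc (0:ℝ) 1) (hb : b ∈ Set.Icc (0:ℝ) 1)
    (he : e ∈ Set.Icc (0:ℝ) 1) :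
    (let p := qsplitPMF a b e
     let Yv : Bool × Bool × Bool → Bool := fun ω => ω.1
     let Yhv : Bool × Bool × Bool → Bool := fun ω => ω.2.1
     let Tv : Bool × Bool × Bool → Bool := fun ω => ω.2.2
     let Uv : Bool × Bool × Bool → Bool := fun ω => if Tv ω then Yhv ω else false
     let Vv : Bool × Bool × Bool → Bool := fun ω => if Tv ω then false else Yhv ω
     let Gv : Bool × Bool × Bool → Bool := fun ω => Uv ω || Vv ω
     -- (i) Markov chain Y – Ŷ – (U,V)
     CondIndep p Yv (fun ω => (Uv ω, Vv ω)) Yhv ∧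
     -- (ii) (Y, g(U,V)) ∼ (Y, Ŷ)
     (∀ y x : Bool, dist p (fun ω => (Yv ω, Gv ω)) (y, x) =
        dist p (fun ω => (Yv ω, Yhv ω)) (y, x)) ∧
     -- (iii) ε = 0 : g(U,V) independent of U
     (e = 0 → Indep p Uv Gv) ∧
     -- (iv) ε = 1 : g(U,V) = U almost surely
     (e = 1 → (∑ ω : Bool × Bool × Bool, if Gv ω = Uv ω then p ω else 0) = 1)) := by
  refine ⟨?_, ?_, ?_, ?_⟩
  · intro x y z
    simp only [dist, qsplitPMF, Fintype.sum_prod_type, Fin.sum_univ_succ, Fintype.sum_bool]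
    rcases x <;> rcases z <;> rcases y with ⟨u, v⟩ <;> rcases u <;> rcases v <;>
      simp <;> ring
  · intro y x
    simp only [dist, qsplitPMF, Fintype.sum_prod_type, Fintype.sum_bool]
    rcases y <;> rcases x <;> simp <;> ring
  · rintro rfl u g
    simp only [dist, qsplitPMF, Fintype.sum_prod_type, Fintype.sum_bool]
    rcases u <;> rcases g <;> simp <;> ring
  · rintro rfl
    simp only [qsplitPMF, Fintype.sum_prod_type, Fintype.sum_bool]
    simp
    all_goals nlinarith [ha.1, ha.2, hb.1, hb.2]

end CRAN
end

section
/- Under the uplink C-RAN distribution ∏_k p(x_k) p(y_1^L|x_1^K) ∏_ℓ p(ŷ_ℓ|y_ℓ), for any S ⊆ [K] and T ⊆ [L], if a tuple (R_1,…,R_K,C_1,…,C_L) satisfies C(T') − R(S') ≥ I(Y_{T'};Ŷ_{T'} | X_1^K) − I(X_{S'};Ŷ_{(T')^c} | X_{(S')^c}) for all S' ⊆ [K], T' ⊆ [L] (membership in R_JD), and in addition C([L]) − R([K]) = I(Y_1^L;Ŷ_1^L | X_1^K), then C(T) − R(S) ≤ I(Y_T; Ŷ_T | X_S). -/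
/-!
Write `h_ℓ = H(Ŷ_ℓ | Y_ℓ)`. Since each `Ŷ_ℓ` is produced from `Y_ℓ` by its own channel,
`H(Ŷ_T | Y_T, V) = ∑_{ℓ ∈ T} h_ℓ` for every `V` that is a function of `(X, Y)`, hence
`I(Y_T; Ŷ_T | V) = H(Ŷ_T | V) - h(T)`. Subtracting the `R_JD` constraint for `(Sᶜ, Tᶜ)` from the
dominant-face equality gives
`C(T) - R(S) ≤ H(Ŷ | X) - H(Ŷ_{Tᶜ} | X) - h(T) + H(Ŷ_T | X_S) - H(Ŷ_T | X)`,
and subadditivity `H(Ŷ | X) ≤ H(Ŷ_T | X) + H(Ŷ_{Tᶜ} | X)` bounds the right-hand side by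
`H(Ŷ_T | X_S) - h(T) = I(Y_T; Ŷ_T | X_S)`.
-/

open scoped BigOperators

namespace CRAN

variable {Ω : Type*} [Fintype Ω]

open Finset Real

noncomputable def entropy {α : Type*} [Fintype α] (v : α → ℝ) : ℝ := ∑ a, negMulLog (v a)

/-- `(∑ v) * entropy (v / ∑ v)`; unlike `entropy`, it is homogeneous in `v`. -/
noncomputable def scaledEntropy {α : Type*} [Fintype α] (v : α → ℝ) : ℝ :=
  entropy v - negMulLog (∑ a, v a)

/-- The entropy of the normalized weights `v / ∑ v` (and `0` when `∑ v = 0`). -/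
noncomputable def normEntropy {α : Type*} [Fintype α] (v : α → ℝ) : ℝ :=
  scaledEntropy v / ∑ a, v a

section Entropy

variable {α ι 𝒵 : Type*} [Fintype α] [Fintype 𝒵]

theorem entropy_prod {β : Type*} [Fintype β] (J : α × β → ℝ) :
    entropy J = entropy (fun a => ∑ b, J (a, b)) + ∑ a, scaledEntropy (fun b => J (a, b)) := by
  rw [entropy, Fintype.sum_prod_type, entropy, ← sum_add_distrib]
  exact sum_congr rfl fun a _ => by rw [scaledEntropy, entropy]; ring

theorem scaledEntropy_const_mul (c : ℝ) (v : α → ℝ) :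
    scaledEntropy (fun a => c * v a) = c * scaledEntropy v := by
  simp only [scaledEntropy, entropy, ← mul_sum, negMulLog_mul, sum_add_distrib, ← sum_mul]
  ring

theorem sum_mul_normEntropy {v : α → ℝ} (hv : ∀ a, 0 ≤ v a) :
    (∑ a, v a) * normEntropy v = scaledEntropy v := by
  by_cases h : ∑ a, v a = 0
  · have hv0 : ∀ a, v a = 0 := fun a =>
      (sum_eq_zero_iff_of_nonneg fun a _ => hv a).1 h a (mem_univ a)
    simp [scaledEntropy, entropy, hv0]
  · rw [normEntropy, mul_div_cancel₀ _ h]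

theorem negMulLog_prod [DecidableEq ι] (s : Finset ι) (f : ι → ℝ) :
    negMulLog (∏ i ∈ s, f i) = ∑ i ∈ s, negMulLog (f i) * ∏ j ∈ s.erase i, f j := by
  induction s using Finset.induction_on with
  | empty => simp
  | insert a s ha ih =>
    have herase : ∀ i ∈ s, ∏ j ∈ (insert a s).erase i, f j = f a * ∏ j ∈ s.erase i, f j :=
      fun i hi => by
        rw [erase_insert_of_ne (ne_of_mem_of_not_mem hi ha).symm,
          prod_insert fun h => ha (mem_of_mem_erase h)]
    rw [prod_insert ha, negMulLog_mul, ih, sum_insert ha, erase_insert ha, mul_sum]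
    congr 1
    · ring
    · exact sum_congr rfl fun i hi => by rw [herase i hi]; ring

theorem sum_pi_mul_prod_erase [DecidableEq ι] [Fintype ι] (f : 𝒵 → ℝ) (g : ι → 𝒵 → ℝ) (i : ι) :
    ∑ z : ι → 𝒵, f (z i) * ∏ j ∈ univ.erase i, g j (z j) =
      (∑ w, f w) * ∏ j ∈ univ.erase i, ∑ w, g j w := by
  set h := Function.update g i f
  have hf : h i = f := Function.update_self i f g
  have hg : ∀ j ∈ univ.erase i, h j = g j := fun j hj =>
    Function.update_of_ne (ne_of_mem_erase hj) f g
  calc ∑ z : ι → 𝒵, f (z i) * ∏ j ∈ univ.erase i, g j (z j)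
      = ∑ z : ι → 𝒵, ∏ j, h j (z j) := sum_congr rfl fun z _ => by
        rw [← mul_prod_erase univ (fun j => h j (z j)) (mem_univ i), hf,
          prod_congr rfl fun j hj => by rw [← hg j hj]]
    _ = (∑ w, f w) * ∏ j ∈ univ.erase i, ∑ w, g j w := by
        rw [← Fintype.prod_sum, ← mul_prod_erase univ _ (mem_univ i), hf,
          prod_congr rfl fun j hj => by rw [hg j hj]]

theorem scaledEntropy_pi [DecidableEq ι] [Fintype ι] (v : ι → 𝒵 → ℝ) :
    scaledEntropy (fun z : ι → 𝒵 => ∏ i, v i (z i)) =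
      ∑ i, scaledEntropy (v i) * ∏ j ∈ univ.erase i, ∑ w, v j w := by
  simp only [scaledEntropy, entropy, negMulLog_prod, ← Fintype.prod_sum]
  rw [sum_comm, ← sum_sub_distrib]
  refine sum_congr rfl fun i _ => ?_
  rw [sum_pi_mul_prod_erase (fun w => negMulLog (v i w)), sub_mul]

theorem scaledEntropy_mul_pi [DecidableEq ι] [Fintype ι] (c : ℝ) {v : ι → 𝒵 → ℝ}
    (hv : ∀ i w, 0 ≤ v i w) :
    scaledEntropy (fun z : ι → 𝒵 => c * ∏ i, v i (z i)) =
      (∑ z : ι → 𝒵, c * ∏ i, v i (z i)) * ∑ i, normEntropy (v i) := by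
  rw [scaledEntropy_const_mul, scaledEntropy_pi, ← mul_sum, ← Fintype.prod_sum, mul_assoc,
    mul_sum univ (fun i => normEntropy (v i))]
  congr 1
  refine sum_congr rfl fun i _ => ?_
  rw [← sum_mul_normEntropy (hv i), ← mul_prod_erase univ (fun j => ∑ w, v j w) (mem_univ i)]
  ring

theorem entropy_mul_pi_kernel {𝒴 : Type*} [DecidableEq ι] [Fintype ι]
    {J : α × (ι → 𝒵) → ℝ} {m : α → ℝ} {c : α → ι → 𝒴} {r : ι → 𝒴 → 𝒵 → ℝ}
    (hr : ∀ i y w, 0 ≤ r i y w) (hJ : ∀ a z, J (a, z) = m a * ∏ i, r i (c a i) (z i)) :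
    entropy J = entropy (fun a => ∑ z, J (a, z)) +
      ∑ a, (∑ z, J (a, z)) * ∑ i, normEntropy (r i (c a i)) := by
  rw [entropy_prod]
  simp only [hJ, scaledEntropy_mul_pi _ fun i => hr i _]

end Entropy

theorem sum_pi_prod_restrict_eq {ι 𝒵 : Type*} [Fintype ι] [DecidableEq ι] [Fintype 𝒵]
    [DecidableEq 𝒵] (F : ι → 𝒵 → ℝ) (T : Finset ι) (z : T → 𝒵) :
    ∑ z' : ι → 𝒵, (if (fun i : T => z' i) = z then ∏ i, F i (z' i) else 0) =
      (∏ i : T, F i (z i)) * ∏ i : {i // i ∉ T}, ∑ w, F i w := by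
  set e := (Equiv.piEquivPiSubtypeProd (· ∈ T) fun _ => 𝒵).symm
  have hres : ∀ z₁ z₂, (fun i : T => e (z₁, z₂) i) = z₁ := fun z₁ z₂ => funext fun i => by
    simp [e, i.2]
  have hprod : ∀ z₁ z₂, ∏ i, F i (e (z₁, z₂) i) =
      (∏ i : T, F i (z₁ i)) * ∏ i : {i // i ∉ T}, F i (z₂ i) := fun z₁ z₂ => by
    rw [← prod_mul_prod_compl T, ← prod_coe_sort T,
      prod_subtype Tᶜ (p := (· ∉ T)) fun _ => mem_compl]
    congr 1 <;> exact prod_congr rfl fun i _ => by simp [e, i.2]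
  rw [← e.sum_comp, Fintype.sum_prod_type, sum_eq_single z (fun z₁ _ h => by simp [hres, h])
    (by simp)]
  simp only [hres, hprod, if_true, ← mul_sum, Fintype.prod_sum]

section Dist

variable {α β γ : Type*} [DecidableEq α] [DecidableEq β] [DecidableEq γ] {p : Ω → ℝ}

theorem dist_congr {X : Ω → α} {Y : Ω → β} {x : α} {y : β} (h : ∀ ω, X ω = x ↔ Y ω = y) :
    dist p X x = dist p Y y :=
  sum_congr rfl fun ω _ => if_congr (h ω) rfl rfl

theorem dist_nonneg (hp : ∀ ω, 0 ≤ p ω) (X : Ω → α) (x : α) : 0 ≤ dist p X x :=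
  sum_nonneg fun ω _ => by split_ifs <;> simp [hp ω]

theorem le_dist_self (hp : ∀ ω, 0 ≤ p ω) (X : Ω → α) (ω : Ω) : p ω ≤ dist p X (X ω) := by
  have := single_le_sum (f := fun ω' => if X ω' = X ω then p ω' else 0)
    (fun ω' _ => by split_ifs <;> simp [hp ω']) (mem_univ ω)
  simpa [dist] using this

theorem sum_dist_mul [Fintype α] (X : Ω → α) (F : α → ℝ) :
    ∑ x, dist p X x * F x = ∑ ω, p ω * F (X ω) := by
  simp only [dist, sum_mul, ite_mul, zero_mul]
  rw [sum_comm]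
  simp

theorem dist_le_dist_of_imp (hp : ∀ ω, 0 ≤ p ω) {X : Ω → α} {Y : Ω → β} {x : α} {y : β}
    (h : ∀ ω, X ω = x → Y ω = y) : dist p X x ≤ dist p Y y :=
  sum_le_sum fun ω _ => by
    by_cases hX : X ω = x
    · simp [hX, h ω hX]
    · split_ifs <;> simp [hp ω]

theorem sum_dist [Fintype α] (X : Ω → α) : ∑ x, dist p X x = ∑ ω, p ω := by
  simpa using sum_dist_mul (p := p) X fun _ => 1

theorem sum_dist_pair_left [Fintype α] (A : Ω → α) (C : Ω → γ) (c : γ) :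
    ∑ a, dist p (fun ω => (A ω, C ω)) (a, c) = dist p C c := by
  simp only [dist]
  rw [sum_comm]
  exact sum_congr rfl fun ω _ => by simp [Prod.ext_iff, ite_and]

theorem sum_dist_pair_right [Fintype γ] (A : Ω → α) (C : Ω → γ) (a : α) :
    ∑ c, dist p (fun ω => (A ω, C ω)) (a, c) = dist p A a := by
  simp only [dist]
  rw [sum_comm]
  exact sum_congr rfl fun ω _ => by simp [Prod.ext_iff, ite_and]

theorem dist_eq_sum_of_comp [Fintype α] {W : Ω → α} {X : Ω → β} (f : α → β)
    (hX : ∀ ω, X ω = f (W ω)) (x : β) :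
    dist p X x = ∑ w, if f w = x then dist p W w else 0 := by
  have := sum_dist_mul (p := p) W fun w => if f w = x then 1 else 0
  simp only [mul_boole] at this
  rw [this]
  simp [dist, hX]

theorem ent_eq_entropy [Fintype α] (X : Ω → α) :
    ent p X = entropy (dist p X) := rfl

theorem ent_eq_neg_sum [Fintype α] (X : Ω → α) :
    ent p X = -∑ ω, p ω * log (dist p X (X ω)) := by
  rw [← sum_dist_mul X fun x => log (dist p X x), ent, ← sum_neg_distrib]
  simp only [negMulLog_eq_neg]

theorem ent_comp_of_injective [Fintype α] [Fintype β] {f : α → β} (hf : Function.Injective f)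
    {X : Ω → α} {Y : Ω → β} (hY : ∀ ω, Y ω = f (X ω)) : ent p Y = ent p X := by
  have hdist : ∀ x, dist p Y (f x) = dist p X x := fun x =>
    dist_congr fun ω => by rw [hY, hf.eq_iff]
  simp only [ent_eq_neg_sum, hY, hdist]

end Dist

theorem sub_le_mul_log_div {x y : ℝ} (hx : 0 ≤ x) (hy : 0 ≤ y) (hxy : 0 < x → 0 < y) :
    x - y ≤ x * log (x / y) := by
  rcases hx.eq_or_lt with rfl | hx
  · simpa using hy
  have hy := hxy hx
  have h := mul_le_mul_of_nonneg_left (log_le_sub_one_of_pos (div_pos hy hx)) hx.le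
  have hsub : x * (y / x - 1) = y - x := by field_simp
  rw [log_div hy.ne' hx.ne', hsub] at h
  rw [log_div hx.ne' hy.ne']
  linarith

section CondMutualInfo

variable {α β γ : Type*} [Fintype α] [DecidableEq α] [Fintype β] [DecidableEq β]
  [Fintype γ] [DecidableEq γ] {p : Ω → ℝ}

theorem cmi_eq_sum (A : Ω → α) (B : Ω → β) (C : Ω → γ) :
    cmi p A B C = ∑ ω, p ω * log (dist p C (C ω) *
      dist p (fun ω => (A ω, B ω, C ω)) (A ω, B ω, C ω) /
        (dist p (fun ω => (A ω, C ω)) (A ω, C ω) * dist p (fun ω => (B ω, C ω)) (B ω, C ω))) := by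
  have := sum_dist_mul (p := p) (fun ω => (A ω, B ω, C ω)) fun t =>
    log (dist p C t.2.2 * dist p (fun ω => (A ω, B ω, C ω)) t /
      (dist p (fun ω => (A ω, C ω)) (t.1, t.2.2) * dist p (fun ω => (B ω, C ω)) t.2))
  simp only [Fintype.sum_prod_type] at this
  exact this

theorem cmi_eq_ent (hp : ∀ ω, 0 ≤ p ω) (A : Ω → α) (B : Ω → β) (C : Ω → γ) :
    cmi p A B C = ent p (fun ω => (A ω, C ω)) + ent p (fun ω => (B ω, C ω)) - ent p C -
      ent p (fun ω => ((A ω, C ω), B ω)) := by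
  rw [cmi_eq_sum]
  set ABC := fun ω => (A ω, B ω, C ω)
  set AC := fun ω => (A ω, C ω)
  set BC := fun ω => (B ω, C ω)
  have hACB : ∀ ω, dist p (fun ω => ((A ω, C ω), B ω)) ((A ω, C ω), B ω) = dist p ABC (ABC ω) :=
    fun ω => dist_congr fun ω' => by simp only [ABC, Prod.mk.injEq]; tauto
  have hterm : ∀ ω, p ω * log (dist p C (C ω) * dist p ABC (ABC ω) /
      (dist p AC (AC ω) * dist p BC (BC ω))) = p ω * log (dist p C (C ω)) +
        p ω * log (dist p ABC (ABC ω)) - p ω * log (dist p AC (AC ω)) -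
        p ω * log (dist p BC (BC ω)) := fun ω => by
    rcases (hp ω).eq_or_lt with h0 | hpos
    · simp [← h0]
    have h1 := hpos.trans_le (le_dist_self hp C ω)
    have h2 := hpos.trans_le (le_dist_self hp ABC ω)
    have h3 := hpos.trans_le (le_dist_self hp AC ω)
    have h4 := hpos.trans_le (le_dist_self hp BC ω)
    rw [log_div (by positivity) (by positivity), log_mul h1.ne' h2.ne', log_mul h3.ne' h4.ne']
    ring
  rw [sum_congr rfl fun ω _ => hterm ω]
  simp only [ent_eq_neg_sum, hACB, sum_add_distrib, sum_sub_distrib]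
  ring

theorem cmi_nonneg (hp : ∀ ω, 0 ≤ p ω) (A : Ω → α) (B : Ω → β) (C : Ω → γ) :
    0 ≤ cmi p A B C := by
  set P := fun a b c => dist p (fun ω => (A ω, B ω, C ω)) (a, b, c)
  set PAC := fun a c => dist p (fun ω => (A ω, C ω)) (a, c)
  set PBC := fun b c => dist p (fun ω => (B ω, C ω)) (b, c)
  have hterm : ∀ a b c, P a b c - PAC a c * PBC b c / dist p C c ≤
      P a b c * log (dist p C c * P a b c / (PAC a c * PBC b c)) := fun a b c => by
    have hPAC : P a b c ≤ PAC a c :=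
      dist_le_dist_of_imp (X := fun ω => (A ω, B ω, C ω)) hp fun ω h => by simp_all
    have hPBC : P a b c ≤ PBC b c :=
      dist_le_dist_of_imp (X := fun ω => (A ω, B ω, C ω)) hp fun ω h => by simp_all
    have hPC : PAC a c ≤ dist p C c :=
      dist_le_dist_of_imp (X := fun ω => (A ω, C ω)) hp fun ω h => by simp_all
    have hP0 : 0 ≤ P a b c := dist_nonneg hp _ _
    rw [show dist p C c * P a b c / (PAC a c * PBC b c) = P a b c / (PAC a c * PBC b c / dist p C c)
      by rw [div_div_eq_mul_div, mul_comm]]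
    refine sub_le_mul_log_div hP0 (div_nonneg (mul_nonneg (hP0.trans hPAC) (hP0.trans hPBC))
      ((hP0.trans hPAC).trans hPC)) fun hP => ?_
    exact div_pos (mul_pos (hP.trans_le hPAC) (hP.trans_le hPBC)) ((hP.trans_le hPAC).trans_le hPC)
  have hmass : ∑ a, ∑ b, ∑ c, PAC a c * PBC b c / dist p C c = ∑ a, ∑ b, ∑ c, P a b c := by
    calc ∑ a, ∑ b, ∑ c, PAC a c * PBC b c / dist p C c
        = ∑ c, (∑ a, PAC a c) * (∑ b, PBC b c) / dist p C c := by
          symm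
          simp only [sum_mul_sum, sum_div]
          rw [sum_comm]
          exact sum_congr rfl fun a _ => sum_comm
      _ = ∑ ω, p ω := by
          simp only [PAC, PBC, sum_dist_pair_left, mul_self_div_self, sum_dist]
      _ = ∑ a, ∑ b, ∑ c, P a b c := by
          simp only [P, ← Fintype.sum_prod_type', Prod.mk.eta, sum_dist]
  calc (0 : ℝ) = ∑ a, ∑ b, ∑ c, (P a b c - PAC a c * PBC b c / dist p C c) := by
        simp only [sum_sub_distrib, hmass, sub_self]
    _ ≤ cmi p A B C := sum_le_sum fun a _ => sum_le_sum fun b _ => sum_le_sum fun c _ => hterm a b c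

end CondMutualInfo

/-- Given `(X, Y)`, each `Yh i` is drawn from `Y i` through its own channel, with (unnormalized)
transition weights `r i`, independently across `i`. -/
def IsIndepChannelOutput {𝒰 ι 𝒴 𝒵 : Type*} [DecidableEq 𝒰] [Fintype ι] [DecidableEq 𝒴]
    [DecidableEq 𝒵] (p : Ω → ℝ) (X : Ω → 𝒰) (Y : ι → Ω → 𝒴) (Yh : ι → Ω → 𝒵)
    (r : ι → 𝒴 → 𝒵 → ℝ) : Prop :=
  ∃ g : 𝒰 → (ι → 𝒴) → ℝ, ∀ x y z,
    dist p (fun ω => (X ω, fun i => Y i ω, fun i => Yh i ω)) (x, y, z) =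
      g x y * ∏ i, r i (y i) (z i)

namespace IsIndepChannelOutput

variable {𝒰 𝒱 ι 𝒴 𝒵 : Type*} [Fintype 𝒰] [DecidableEq 𝒰] [DecidableEq 𝒱] [Fintype ι]
  [DecidableEq ι] [Fintype 𝒴] [DecidableEq 𝒴] [Fintype 𝒵] [DecidableEq 𝒵]
  {p : Ω → ℝ} {X : Ω → 𝒰} {Y : ι → Ω → 𝒴} {Yh : ι → Ω → 𝒵} {r : ι → 𝒴 → 𝒵 → ℝ}

theorem exists_dist_tup (hW : IsIndepChannelOutput p X Y Yh r) (T : Finset ι) {V : Ω → 𝒱}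
    (f : 𝒰 → (ι → 𝒴) → 𝒱) (hV : ∀ ω, V ω = f (X ω) fun i => Y i ω) :
    ∃ m : (T → 𝒴) × 𝒱 → ℝ, ∀ u z,
      dist p (fun ω => ((tup Y T ω, V ω), tup Yh T ω)) (u, z) =
        m u * ∏ i : T, r i (u.1 i) (z i) := by
  obtain ⟨g, hg⟩ := hW
  refine ⟨fun u => ∑ x, ∑ y, if ((fun i : T => y i), f x y) = u then
    g x y * ∏ i : {i // i ∉ T}, ∑ w, r i (y i) w else 0, fun u z => ?_⟩
  rw [dist_eq_sum_of_comp (W := fun ω => (X ω, fun i => Y i ω, fun i => Yh i ω))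
    (fun t => (((fun i : T => t.2.1 i), f t.1 t.2.1), fun i : T => t.2.2 i))
    (fun ω => by rw [hV]; rfl)]
  simp only [Fintype.sum_prod_type, hg, sum_mul]
  refine sum_congr rfl fun x _ => sum_congr rfl fun y _ => ?_
  split_ifs with hu
  · subst hu
    simp only [Prod.mk.injEq, true_and, ← mul_ite_zero, ← mul_sum, sum_pi_prod_restrict_eq]
    ring
  · rw [zero_mul]
    exact sum_eq_zero fun z' _ => if_neg fun h => hu (congrArg Prod.fst h)

theorem ent_tup [Fintype 𝒱] (hW : IsIndepChannelOutput p X Y Yh r) (hr : ∀ i y w, 0 ≤ r i y w)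
    (T : Finset ι) {V : Ω → 𝒱} (f : 𝒰 → (ι → 𝒴) → 𝒱) (hV : ∀ ω, V ω = f (X ω) fun i => Y i ω) :
    ent p (fun ω => ((tup Y T ω, V ω), tup Yh T ω)) =
      ent p (fun ω => (tup Y T ω, V ω)) + ∑ i ∈ T, ∑ ω, p ω * normEntropy (r i (Y i ω)) := by
  obtain ⟨m, hm⟩ := hW.exists_dist_tup T f hV
  rw [ent_eq_entropy, entropy_mul_pi_kernel (fun i : T => hr i) hm]
  simp only [sum_dist_pair_right, ← ent_eq_entropy, sum_dist_mul]
  simp only [mul_sum]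
  rw [sum_comm, ← sum_coe_sort T]
  rfl

theorem cmi_tup [Fintype 𝒱] (hp : ∀ ω, 0 ≤ p ω) (hW : IsIndepChannelOutput p X Y Yh r)
    (hr : ∀ i y w, 0 ≤ r i y w) (T : Finset ι) {V : Ω → 𝒱} (f : 𝒰 → (ι → 𝒴) → 𝒱)
    (hV : ∀ ω, V ω = f (X ω) fun i => Y i ω) :
    cmi p (tup Y T) (tup Yh T) V = ent p (fun ω => (tup Yh T ω, V ω)) - ent p V -
      ∑ i ∈ T, ∑ ω, p ω * normEntropy (r i (Y i ω)) := by
  rw [cmi_eq_ent hp, hW.ent_tup hr T f hV]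
  ring

end IsIndepChannelOutput

theorem restrict_pair_injective {ι α : Type*} {A B : Finset ι} (h : ∀ i, i ∈ A ∨ i ∈ B) :
    Function.Injective fun x : ι → α => ((fun i : A => x i), fun i : B => x i) := by
  intro x y hxy
  funext i
  rcases h i with hi | hi
  · exact congrFun (congrArg Prod.fst hxy) ⟨i, hi⟩
  · exact congrFun (congrArg Prod.snd hxy) ⟨i, hi⟩

section Restrict

variable {ι α β γ : Type*} [Fintype ι] [DecidableEq ι] [Fintype α] [DecidableEq α]
  [Fintype β] [DecidableEq β] [Fintype γ] [DecidableEq γ] {p : Ω → ℝ}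

theorem cmi_tup_compl (hp : ∀ ω, 0 ≤ p ω) (X : ι → Ω → α) (Z : Ω → β) (S : Finset ι) :
    cmi p (tup X Sᶜ) Z (tup X S) = ent p (fun ω i => X i ω) + ent p (fun ω => (Z ω, tup X S ω)) -
      ent p (tup X S) - ent p (fun ω => (Z ω, fun i => X i ω)) := by
  have hinj := restrict_pair_injective (α := α) (A := Sᶜ) (B := S) fun i =>
    (em (i ∈ S)).symm.imp_left mem_compl.2
  rw [cmi_eq_ent hp, ent_comp_of_injective hinj (X := fun ω i => X i ω)
      (Y := fun ω => (tup X Sᶜ ω, tup X S ω)) fun _ => rfl,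
    ent_comp_of_injective ((hinj.prodMap Function.injective_id).comp Prod.swap_injective)
      (X := fun ω => (Z ω, fun i => X i ω)) (Y := fun ω => ((tup X Sᶜ ω, tup X S ω), Z ω))
      fun _ => rfl]

theorem ent_tup_univ_le (hp : ∀ ω, 0 ≤ p ω) (Z : ι → Ω → β) (V : Ω → γ) (T : Finset ι) :
    ent p (fun ω => (tup Z univ ω, V ω)) ≤
      ent p (fun ω => (tup Z T ω, V ω)) + ent p (fun ω => (tup Z Tᶜ ω, V ω)) - ent p V := by
  have hinj : Function.Injective fun t : (↥(univ : Finset ι) → β) × γ =>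
      ((fun i : T => t.1 ⟨i.1, mem_univ _⟩, t.2), fun i : ↥Tᶜ => t.1 ⟨i.1, mem_univ _⟩) := by
    rintro ⟨z, v⟩ ⟨z', v'⟩ h
    simp only [Prod.mk.injEq] at h
    obtain ⟨⟨hT, rfl⟩, hTc⟩ := h
    congr 1
    funext ⟨i, hi⟩
    by_cases hiT : i ∈ T
    · exact congrFun hT ⟨i, hiT⟩
    · exact congrFun hTc ⟨i, mem_compl.2 hiT⟩
  have h := cmi_nonneg hp (tup Z T) (tup Z Tᶜ) V
  rw [cmi_eq_ent hp, ent_comp_of_injective hinj (X := fun ω => (tup Z univ ω, V ω))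
    (Y := fun ω => ((tup Z T ω, V ω), tup Z Tᶜ ω)) fun _ => rfl] at h
  linarith

end Restrict

/-- Under the uplink C-RAN factorization, any point of the joint-decoding
region `R_JD` lying on the dominant face (`C([L]) − R([K]) = I(Y_1^L;Ŷ_1^L|X_1^K)`)
satisfies `C(T) − R(S) ≤ I(Y_T; Ŷ_T | X_S)` for all `S ⊆ [K]`, `T ⊆ [L]`. -/
theorem stmt12 {Ω 𝒳 𝒴 𝒵 : Type*} [Fintype Ω]
    [Fintype 𝒳] [DecidableEq 𝒳] [Fintype 𝒴] [DecidableEq 𝒴] [Fintype 𝒵] [DecidableEq 𝒵]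
    {K L : ℕ} (p : Ω → ℝ) (hp : IsPMF p)
    (X : Fin K → Ω → 𝒳) (Y : Fin L → Ω → 𝒴) (Yh : Fin L → Ω → 𝒵)
    (hFac : CRANFactor p X Y Yh) (R : Fin K → ℝ) (C : Fin L → ℝ)
    (hJD : ∀ (S' : Finset (Fin K)) (T' : Finset (Fin L)),
      (∑ i ∈ T', C i) - (∑ i ∈ S', R i) ≥
        cmi p (tup Y T') (tup Yh T') (fun ω (i : Fin K) => X i ω) -
          cmi p (tup X S') (tup Yh T'ᶜ) (tup X S'ᶜ))
    (hDF : (∑ i, C i) - (∑ i, R i) =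
      cmi p (tup Y Finset.univ) (tup Yh Finset.univ) (fun ω (i : Fin K) => X i ω))
    (S : Finset (Fin K)) (T : Finset (Fin L)) :
    (∑ i ∈ T, C i) - (∑ i ∈ S, R i) ≤ cmi p (tup Y T) (tup Yh T) (tup X S) := by
  obtain ⟨q, r, -, hr, hfac⟩ := hFac
  have hW : IsIndepChannelOutput p (fun ω i => X i ω) Y Yh r := ⟨_, hfac⟩
  have hA := fun T' => hW.cmi_tup hp.1 hr T' (V := fun ω i => X i ω) (fun x _ => x) fun _ => rfl
  have hD := hW.cmi_tup hp.1 hr T (V := tup X S) (fun x _ i => x i) fun _ => rfl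
  have hC := cmi_tup_compl hp.1 X (tup Yh T) S
  have hE := ent_tup_univ_le hp.1 Yh (fun ω i => X i ω) T
  have hJ := hJD Sᶜ Tᶜ
  rw [compl_compl, compl_compl, hA, hC] at hJ
  rw [hA] at hDF
  rw [hD]
  have hh := sum_add_sum_compl T fun i => ∑ ω, p ω * normEntropy (r i (Y i ω))
  have hCT := sum_add_sum_compl T C
  have hRS := sum_add_sum_compl S R
  linarith

end CRAN
end
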